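/- A word w ∈ Γ* is reduced if and only if w is α-reduced for every α ∈ L. -/

import Mathlib

/-!
Merging the two letters of a factor `b u b'` with `u ∈ I(β)` into one letter of `Γ_β` does not
change the represented element, so a word that is `α`-reduced for every `α` is reduced.

Conversely, `g ∈ G_α` acts on words by travelling past the letters independent of `α` and
merging into the first letter of `Γ_α` it meets, or stopping in front of the first letter it
does not commute with. This maps reduced words to reduced words, respects trace equivalence, and
on reduced words satisfies the defining relations of the graph product up to trace equivalence,
so the graph product acts on trace classes of reduced words. Acting with the letters of a word
`w'` on the empty word yields a reduced word whose class depends only on the element `w'`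
represents, which has no more letters of any `Γ_α` than `w'`, and which is trace equivalent to
`w'` when `w'` is reduced. Trace equivalent words have the same letter counts.
-/

/-- The set of commutator relators defining a graph product. -/
def gpRels {L : Type} (I : L → L → Prop) (G : L → Type) [∀ α, Group (G α)] :
    Set (Monoid.CoprodI G) :=
  {x | ∃ (α β : L) (g : G α) (h : G β), I α β ∧
    x = Monoid.CoprodI.of g * Monoid.CoprodI.of h *
        (Monoid.CoprodI.of g)⁻¹ * (Monoid.CoprodI.of h)⁻¹}

/-- The graph product of the groups `G α` over the independence relation `I`. -/
def GP {L : Type} (I : L → L → Prop) (G : L → Type) [∀ α, Group (G α)] : Type :=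
  Monoid.CoprodI G ⧸ Subgroup.normalClosure (gpRels I G)

instance {L : Type} (I : L → L → Prop) (G : L → Type) [∀ α, Group (G α)] :
    Group (GP I G) := QuotientGroup.Quotient.group _

/-- The canonical homomorphism of a node group into the graph product. -/
def gpOf {L : Type} (I : L → L → Prop) (G : L → Type) [∀ α, Group (G α)] (α : L) :
    G α →* GP I G :=
  (QuotientGroup.mk' _).comp Monoid.CoprodI.of

/-- A letter: a nontrivial element of one of the node groups. -/
abbrev Letter (L : Type) (G : L → Type) [∀ α, Group (G α)] : Type :=
  Σ α : L, {g : G α // g ≠ 1}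

variable {L : Type} (I : L → L → Prop) (G : L → Type) [∀ α, Group (G α)]

/-- The element of the graph product represented by a word. -/
def evalWord (w : List (Letter L G)) : GP I G :=
  (w.map fun l => gpOf I G l.1 l.2.1).prod

/-- One elementary commutation step between trace-equivalent words. -/
inductive TraceStep : List (Letter L G) → List (Letter L G) → Prop
  | swap (u v : List (Letter L G)) (a b : Letter L G) (h : I a.1 b.1) :
      TraceStep (u ++ a :: b :: v) (u ++ b :: a :: v)

/-- Trace equivalence: the congruence generated by commuting independent letters. -/
def TraceEquiv : List (Letter L G) → List (Letter L G) → Prop :=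
  Relation.EqvGen (TraceStep I G)

/-- `IndepWord I G β u` means every letter of `u` is independent of `β`,
i.e. `u ∈ I(β)`. -/
def IndepWord (β : L) (u : List (Letter L G)) : Prop := ∀ c ∈ u, I c.1 β

/-- A word is reduced if it contains no factor `b u b'` with `b, b' ∈ Γ_β`
and `u ∈ I(β)`. -/
def Reduced (w : List (Letter L G)) : Prop :=
  ¬ ∃ (β : L) (b b' : {g : G β // g ≠ 1}) (x u y : List (Letter L G)),
      w = x ++ (⟨β, b⟩ : Letter L G) :: (u ++ (⟨β, b'⟩ : Letter L G) :: y) ∧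
      IndepWord I G β u

/-- `|w|_α` : number of letters of `w` in `Γ_α`. -/
noncomputable def countAlpha (α : L) (w : List (Letter L G)) : ℕ :=
  (w.filter fun l => Classical.propDecidable (l.1 = α) |>.decide).length

/-- The alphabet `al(w)` of a word. -/
def alph (w : List (Letter L G)) : Set L := {α | ∃ l ∈ w, l.1 = α}

/-- A reduced word is cyclically reduced if it has no factorization `≡ a v a'`
with `a, a'` letters from the same node group. -/
def IsCyclicallyReduced (w : List (Letter L G)) : Prop :=
  Reduced I G w ∧
  ¬ ∃ (α : L) (a a' : {g : G α // g ≠ 1}) (v : List (Letter L G)),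
      TraceEquiv I G w ((⟨α, a⟩ : Letter L G) :: (v ++ [(⟨α, a'⟩ : Letter L G)]))

/-- Words `u` and `v` are transposed if `u ≡ r s` and `v ≡ s r`. -/
def Transposed (u v : List (Letter L G)) : Prop :=
  ∃ r s : List (Letter L G), TraceEquiv I G u (r ++ s) ∧ TraceEquiv I G v (s ++ r)

/-- `u ≈ v` : the reflexive-transitive closure of transposition. -/
def TransClosure : List (Letter L G) → List (Letter L G) → Prop :=
  Relation.ReflTransGen (Transposed I G)

/-- The formal inverse of a letter. -/
def letterInv (l : Letter L G) : Letter L G :=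
  ⟨l.1, ⟨(l.2 : G l.1)⁻¹, inv_ne_one.mpr l.2.2⟩⟩

/-- The formal inverse `p̄` of a word `p`. -/
def wordInv (w : List (Letter L G)) : List (Letter L G) :=
  (w.map (letterInv G)).reverse

/-- The dependence graph on `L`: distinct nodes are adjacent iff not independent. -/
def depGraph : SimpleGraph L where
  Adj a b := a ≠ b ∧ ¬ I a b ∧ ¬ I b a
  symm := by
    constructor
    intro a b ⟨h1, h2, h3⟩
    exact ⟨h1.symm, h3, h2⟩
  loopless := by constructor; intro a ⟨h1, _⟩; exact h1 rfl

/-- A word is connected if its alphabet induces a connected subgraph of the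
dependence graph. -/
def ConnectedWord (w : List (Letter L G)) : Prop :=
  ((depGraph I).induce (alph G w)).Connected

/-- A word `w` is `α`-reduced if every word with fewer letters from `Γ_α`
represents a different element of the graph product. -/
def AlphaReduced (α : L) (w : List (Letter L G)) : Prop :=
  ∀ w' : List (Letter L G), countAlpha G α w' < countAlpha G α w →
    evalWord I G w' ≠ evalWord I G w

section Words

variable {L : Type} {I : L → L → Prop} {G : L → Type} [∀ α, Group (G α)]

local notation "W" => List (Letter L G)

theorem gpOf_commute {α β : L} (h : I α β) (g : G α) (k : G β) :
    Commute (gpOf I G α g) (gpOf I G β k) := by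
  have hrel : gpOf I G α g * gpOf I G β k * (gpOf I G α g)⁻¹ * (gpOf I G β k)⁻¹ = 1 :=
    (QuotientGroup.eq_one_iff _).mpr (Subgroup.subset_normalClosure ⟨α, β, g, k, h, rfl⟩)
  rwa [mul_inv_eq_one, mul_inv_eq_iff_eq_mul] at hrel

theorem evalWord_cons (l : Letter L G) (w : W) :
    evalWord I G (l :: w) = gpOf I G l.1 l.2.1 * evalWord I G w := by
  simp [evalWord]

theorem evalWord_append (u v : W) :
    evalWord I G (u ++ v) = evalWord I G u * evalWord I G v := by
  simp [evalWord]

theorem commute_evalWord_of_indepWord (hsym : ∀ α β, I α β → I β α) {β : L} {u : W}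
    (hu : IndepWord I G β u) (g : G β) : Commute (gpOf I G β g) (evalWord I G u) := by
  induction u with
  | nil => exact Commute.one_right _
  | cons c t ih =>
    simp only [IndepWord, List.mem_cons, forall_eq_or_imp] at hu
    rw [evalWord_cons]
    exact (gpOf_commute (hsym _ _ hu.1) g c.2.1).mul_right (ih hu.2)

theorem countAlpha_append (γ : L) (u v : W) :
    countAlpha G γ (u ++ v) = countAlpha G γ u + countAlpha G γ v := by
  simp [countAlpha]

theorem countAlpha_cons_self (γ : L) (a : {g : G γ // g ≠ 1}) (w : W) :
    countAlpha G γ (⟨γ, a⟩ :: w) = countAlpha G γ w + 1 := by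
  simp [countAlpha]

theorem countAlpha_le_of_subperm (γ : L) {u v : W}
    (h : (u.map Sigma.fst).Subperm (v.map Sigma.fst)) :
    countAlpha G γ u ≤ countAlpha G γ v := by
  simpa [countAlpha, List.countP_eq_length_filter, List.filter_map, Function.comp_def] using
    h.countP_le fun β => (Classical.propDecidable (β = γ)).decide

theorem letter_trichotomy (α : L) (l : Letter L G) :
    (∃ a, l = ⟨α, a⟩) ∨ I l.1 α ∨ (l.1 ≠ α ∧ ¬ I l.1 α) := by
  obtain ⟨β, b⟩ := l
  by_cases h : β = α
  · subst h; exact Or.inl ⟨b, rfl⟩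
  · tauto

namespace TraceEquiv

theorem refl (u : W) : TraceEquiv I G u u := Relation.EqvGen.refl u

theorem of_eq {u v : W} (h : u = v) : TraceEquiv I G u v := h ▸ refl u

theorem symm {u v : W} (h : TraceEquiv I G u v) : TraceEquiv I G v u :=
  Relation.EqvGen.symm u v h

theorem trans {u v w : W} (h₁ : TraceEquiv I G u v) (h₂ : TraceEquiv I G v w) :
    TraceEquiv I G u w :=
  Relation.EqvGen.trans u v w h₁ h₂

theorem swap {a b : Letter L G} (h : I a.1 b.1) (u : W) :
    TraceEquiv I G (a :: b :: u) (b :: a :: u) :=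
  Relation.EqvGen.rel _ _ (TraceStep.swap [] u a b h)

theorem cons (l : Letter L G) {u v : W} (h : TraceEquiv I G u v) :
    TraceEquiv I G (l :: u) (l :: v) := by
  induction h with
  | rel _ _ h =>
    obtain ⟨s, t, a, b, hab⟩ := h
    exact Relation.EqvGen.rel _ _ (TraceStep.swap (l :: s) t a b hab)
  | refl => exact refl _
  | symm _ _ _ ih => exact ih.symm
  | trans _ _ _ _ _ ih₁ ih₂ => exact ih₁.trans ih₂

theorem perm {u v : W} (h : TraceEquiv I G u v) : u.Perm v := by
  induction h with
  | rel _ _ h =>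
    obtain ⟨s, t, a, b, -⟩ := h
    exact (List.Perm.swap b a t).append_left s
  | refl => exact List.Perm.refl _
  | symm _ _ _ ih => exact ih.symm
  | trans _ _ _ _ _ ih₁ ih₂ => exact ih₁.trans ih₂

end TraceEquiv

variable (I G) in
/-- Some letter of `Γ_α` in `u` can be commuted to the front of `u`. -/
def HasHead (α : L) (u : W) : Prop :=
  ∃ (x : W) (a : {g : G α // g ≠ 1}) (y : W),
    u = x ++ (⟨α, a⟩ : Letter L G) :: y ∧ IndepWord I G α x

theorem not_hasHead_nil (α : L) : ¬ HasHead I G α [] := by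
  rintro ⟨x, a, y, h, -⟩
  simp at h

theorem hasHead_cons_iff {α : L} {l : Letter L G} {u : W} :
    HasHead I G α (l :: u) ↔ l.1 = α ∨ I l.1 α ∧ HasHead I G α u := by
  constructor
  · rintro ⟨_ | ⟨d, x⟩, a, y, h, hx⟩
    · cases h; exact Or.inl rfl
    · cases h
      simp only [IndepWord, List.mem_cons, forall_eq_or_imp] at hx
      exact Or.inr ⟨hx.1, x, a, y, rfl, hx.2⟩
  · rintro (h | ⟨hl, x, a, y, rfl, hx⟩)
    · obtain ⟨β, b⟩ := l
      subst h
      exact ⟨[], b, u, rfl, by simp [IndepWord]⟩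
    · refine ⟨l :: x, a, y, rfl, ?_⟩
      simpa [IndepWord, hl] using hx

theorem reduced_nil : Reduced I G ([] : W) := by
  rintro ⟨β, b, b', x, u, y, h, -⟩
  simp at h

theorem reduced_cons_iff {l : Letter L G} {u : W} :
    Reduced I G (l :: u) ↔ Reduced I G u ∧ ¬ HasHead I G l.1 u := by
  simp only [Reduced, HasHead]
  constructor
  · intro h
    refine ⟨fun ⟨β, b, b', x, v, y, hu, hv⟩ => h ⟨β, b, b', l :: x, v, y, by simp [hu], hv⟩, ?_⟩
    rintro ⟨x, a, y, rfl, hx⟩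
    exact h ⟨l.1, l.2, a, [], x, y, rfl, hx⟩
  · rintro ⟨hu, hh⟩ ⟨β, b, b', _ | ⟨d, x⟩, v, y, h, hv⟩
    · cases h; exact hh ⟨v, b', y, rfl, hv⟩
    · cases h; exact hu ⟨β, b, b', x, v, y, rfl, hv⟩

end Words

section Action

variable {L : Type} {I : L → L → Prop} {G : L → Type} [∀ α, Group (G α)]

local notation "W" => List (Letter L G)

variable (G) in
open Classical in
noncomputable def prependElem (α : L) (g : G α) (u : W) : W :=
  if h : g = 1 then u else ⟨α, g, h⟩ :: u

theorem prependElem_one (α : L) (u : W) : prependElem G α 1 u = u := by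
  simp [prependElem]

theorem prependElem_of_ne_one {α : L} {g : G α} (h : g ≠ 1) (u : W) :
    prependElem G α g u = ⟨α, g, h⟩ :: u := by
  simp [prependElem, h]

theorem prependElem_val {α : L} (a : {g : G α // g ≠ 1}) (u : W) :
    prependElem G α a.1 u = ⟨α, a⟩ :: u :=
  prependElem_of_ne_one a.2 u

theorem evalWord_prependElem (α : L) (g : G α) (u : W) :
    evalWord I G (prependElem G α g u) = gpOf I G α g * evalWord I G u := by
  by_cases h : g = 1
  · simp [h, prependElem_one]
  · simp [prependElem_of_ne_one h, evalWord_cons]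

theorem map_fst_prependElem_sublist (α : L) (g : G α) (u : W) :
    ((prependElem G α g u).map Sigma.fst).Sublist (α :: u.map Sigma.fst) := by
  by_cases h : g = 1
  · simp [h, prependElem_one]
  · simp [prependElem_of_ne_one h]

theorem TraceEquiv.prependElem (α : L) (g : G α) {u v : W} (h : TraceEquiv I G u v) :
    TraceEquiv I G (prependElem G α g u) (prependElem G α g v) := by
  by_cases hg : g = 1
  · simpa [hg, prependElem_one] using h
  · simpa [prependElem_of_ne_one hg] using h.cons _

theorem cons_prependElem_traceEquiv {α : L} {l : Letter L G} (hl : I l.1 α) (g : G α)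
    (u : W) : TraceEquiv I G (l :: prependElem G α g u) (prependElem G α g (l :: u)) := by
  by_cases hg : g = 1
  · simpa [hg, prependElem_one] using TraceEquiv.refl _
  · simpa [prependElem_of_ne_one hg] using TraceEquiv.swap (b := ⟨α, g, hg⟩) hl u

theorem prependElem_comm_traceEquiv {α β : L} (hba : I β α) (g : G α) (h : G β) (u : W) :
    TraceEquiv I G (prependElem G α g (prependElem G β h u))
      (prependElem G β h (prependElem G α g u)) := by
  by_cases hh : h = 1
  · simpa [hh, prependElem_one] using TraceEquiv.refl _
  · simpa [prependElem_of_ne_one hh] using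
      (cons_prependElem_traceEquiv (l := ⟨β, h, hh⟩) hba g u).symm

theorem hasHead_of_hasHead_prependElem {α β : L} (hαβ : α ≠ β) {g : G α} {u : W}
    (h : HasHead I G β (prependElem G α g u)) : HasHead I G β u := by
  by_cases hg : g = 1
  · rwa [hg, prependElem_one] at h
  · rw [prependElem_of_ne_one hg, hasHead_cons_iff] at h
    exact h.resolve_left hαβ |>.2

theorem reduced_prependElem {α : L} (g : G α) {u : W} (hu : Reduced I G u)
    (hh : ¬ HasHead I G α u) : Reduced I G (prependElem G α g u) := by
  by_cases hg : g = 1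
  · rwa [hg, prependElem_one]
  · rw [prependElem_of_ne_one hg, reduced_cons_iff]
    exact ⟨hu, hh⟩

variable (I G) in
open Classical in
noncomputable def actWord (α : L) (g : G α) : W → W
  | [] => prependElem G α g []
  | ⟨β, b⟩ :: u =>
    if h : β = α then prependElem G α (g * cast (congrArg G h) b.1) u
    else if I β α then ⟨β, b⟩ :: actWord α g u
    else prependElem G α g (⟨β, b⟩ :: u)

theorem actWord_nil (α : L) (g : G α) : actWord I G α g [] = prependElem G α g [] := rfl

theorem actWord_cons_self {α : L} (g : G α) (a : {g : G α // g ≠ 1}) (u : W) :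
    actWord I G α g (⟨α, a⟩ :: u) = prependElem G α (g * a.1) u := by
  simp [actWord]

theorem actWord_cons_of_indep (hirr : ∀ α, ¬ I α α) {α : L} (g : G α) {l : Letter L G}
    (hl : I l.1 α) (u : W) : actWord I G α g (l :: u) = l :: actWord I G α g u := by
  obtain ⟨β, b⟩ := l
  have hβ : β ≠ α := by rintro rfl; exact hirr β hl
  simp [actWord, hβ, hl]

theorem actWord_cons_of_dep {α : L} (g : G α) {l : Letter L G} (hne : l.1 ≠ α)
    (hdep : ¬ I l.1 α) (u : W) : actWord I G α g (l :: u) = prependElem G α g (l :: u) := by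
  obtain ⟨β, b⟩ := l
  simp [actWord, hne, hdep]

theorem actWord_one (hirr : ∀ α, ¬ I α α) (α : L) (u : W) : actWord I G α 1 u = u := by
  induction u with
  | nil => exact prependElem_one α []
  | cons l u ih =>
    rcases letter_trichotomy (I := I) α l with ⟨a, rfl⟩ | hl | ⟨hne, hdep⟩
    · rw [actWord_cons_self, one_mul, prependElem_val]
    · rw [actWord_cons_of_indep hirr _ hl, ih]
    · rw [actWord_cons_of_dep _ hne hdep, prependElem_one]

theorem map_fst_actWord_subperm (hirr : ∀ α, ¬ I α α) (α : L) (g : G α) (u : W) :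
    ((actWord I G α g u).map Sigma.fst).Subperm (α :: u.map Sigma.fst) := by
  induction u with
  | nil => exact (map_fst_prependElem_sublist α g []).subperm
  | cons l u ih =>
    rcases letter_trichotomy (I := I) α l with ⟨a, rfl⟩ | hl | ⟨hne, hdep⟩
    · rw [actWord_cons_self]
      exact (map_fst_prependElem_sublist α _ u).subperm.cons_right α |>.trans
        (List.Perm.swap α α _).subperm
    · rw [actWord_cons_of_indep hirr _ hl, List.map_cons]
      exact ((List.subperm_cons l.1).mpr ih).trans (List.Perm.swap α l.1 _).subperm
    · rw [actWord_cons_of_dep _ hne hdep]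
      exact (map_fst_prependElem_sublist α g _).subperm

theorem actWord_traceEquiv_prependElem (hirr : ∀ α, ¬ I α α) {α : L} (g : G α) {u : W}
    (hu : ¬ HasHead I G α u) : TraceEquiv I G (actWord I G α g u) (prependElem G α g u) := by
  induction u with
  | nil => exact TraceEquiv.refl _
  | cons l u ih =>
    rw [hasHead_cons_iff, not_or, not_and_or] at hu
    rcases letter_trichotomy (I := I) α l with ⟨a, rfl⟩ | hl | ⟨hne, hdep⟩
    · exact absurd rfl hu.1
    · rw [actWord_cons_of_indep hirr _ hl]
      exact ((ih (hu.2.resolve_left (not_not.mpr hl))).cons l).trans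
        (cons_prependElem_traceEquiv hl g u)
    · rw [actWord_cons_of_dep _ hne hdep]
      exact TraceEquiv.refl _

theorem hasHead_of_hasHead_actWord (hirr : ∀ α, ¬ I α α) {α β : L} (hab : I α β) (g : G α)
    {u : W} (h : HasHead I G β (actWord I G α g u)) : HasHead I G β u := by
  have hαβ : α ≠ β := by rintro rfl; exact hirr α hab
  induction u with
  | nil => exact hasHead_of_hasHead_prependElem hαβ h
  | cons l u ih =>
    rcases letter_trichotomy (I := I) α l with ⟨a, rfl⟩ | hl | ⟨hne, hdep⟩
    · rw [actWord_cons_self] at h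
      exact hasHead_cons_iff.mpr (Or.inr ⟨hab, hasHead_of_hasHead_prependElem hαβ h⟩)
    · rw [actWord_cons_of_indep hirr _ hl, hasHead_cons_iff] at h
      exact hasHead_cons_iff.mpr (h.imp_right fun h => ⟨h.1, ih h.2⟩)
    · rw [actWord_cons_of_dep _ hne hdep] at h
      exact hasHead_of_hasHead_prependElem hαβ h

theorem reduced_actWord (hirr : ∀ α, ¬ I α α) (hsym : ∀ α β, I α β → I β α) {α : L}
    (g : G α) {u : W} (hu : Reduced I G u) : Reduced I G (actWord I G α g u) := by
  induction u with
  | nil => exact reduced_prependElem g reduced_nil (not_hasHead_nil α)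
  | cons l u ih =>
    rw [reduced_cons_iff] at hu
    rcases letter_trichotomy (I := I) α l with ⟨a, rfl⟩ | hl | ⟨hne, hdep⟩
    · rw [actWord_cons_self]
      exact reduced_prependElem _ hu.1 hu.2
    · rw [actWord_cons_of_indep hirr _ hl, reduced_cons_iff]
      exact ⟨ih hu.1, fun h => hu.2 (hasHead_of_hasHead_actWord hirr (hsym _ _ hl) g h)⟩
    · rw [actWord_cons_of_dep _ hne hdep]
      refine reduced_prependElem g (reduced_cons_iff.mpr hu) ?_
      rw [hasHead_cons_iff]
      tauto

theorem actWord_mul (hirr : ∀ α, ¬ I α α) {α : L} (g h : G α) {u : W} (hu : Reduced I G u) :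
    TraceEquiv I G (actWord I G α g (actWord I G α h u)) (actWord I G α (g * h) u) := by
  induction u with
  | nil =>
    by_cases hh : h = 1
    · simpa [hh, actWord_nil, prependElem_one] using TraceEquiv.refl _
    · rw [actWord_nil, actWord_nil, prependElem_of_ne_one hh]
      exact TraceEquiv.of_eq (actWord_cons_self g ⟨h, hh⟩ [])
  | cons l u ih =>
    rw [reduced_cons_iff] at hu
    rcases letter_trichotomy (I := I) α l with ⟨a, rfl⟩ | hl | ⟨hne, hdep⟩
    · rw [actWord_cons_self, actWord_cons_self]
      by_cases hha : h * a.1 = 1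
      · rw [hha, prependElem_one, mul_assoc, hha, mul_one]
        exact actWord_traceEquiv_prependElem hirr g hu.2
      · rw [prependElem_of_ne_one hha, actWord_cons_self, mul_assoc]
        exact TraceEquiv.refl _
    · rw [actWord_cons_of_indep hirr _ hl, actWord_cons_of_indep hirr _ hl,
        actWord_cons_of_indep hirr _ hl]
      exact (ih hu.1).cons l
    · rw [actWord_cons_of_dep _ hne hdep, actWord_cons_of_dep _ hne hdep]
      by_cases hh : h = 1
      · rw [hh, prependElem_one, mul_one, actWord_cons_of_dep _ hne hdep]
        exact TraceEquiv.refl _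
      · rw [prependElem_of_ne_one hh]
        exact TraceEquiv.of_eq (actWord_cons_self g ⟨h, hh⟩ _)

theorem actWord_prependElem_of_indep (hirr : ∀ α, ¬ I α α) {α β : L} (hba : I β α) (g : G α)
    (h : G β) (u : W) :
    actWord I G α g (prependElem G β h u) = prependElem G β h (actWord I G α g u) := by
  by_cases hh : h = 1
  · simp [hh, prependElem_one]
  · simp only [prependElem_of_ne_one hh]
    exact actWord_cons_of_indep hirr g (l := ⟨β, h, hh⟩) hba u

theorem actWord_comm (hirr : ∀ α, ¬ I α α) (hsym : ∀ α β, I α β → I β α) {α β : L}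
    (hab : I α β) (g : G α) (h : G β) (u : W) :
    TraceEquiv I G (actWord I G α g (actWord I G β h u))
      (actWord I G β h (actWord I G α g u)) := by
  have hba := hsym _ _ hab
  induction u with
  | nil =>
    simp only [actWord_nil]
    rw [actWord_prependElem_of_indep hirr hba, actWord_prependElem_of_indep hirr hab,
      actWord_nil, actWord_nil]
    exact prependElem_comm_traceEquiv hab h g []
  | cons l u ih =>
    rcases letter_trichotomy (I := I) α l with ⟨a, rfl⟩ | hlα | ⟨hneα, hdepα⟩
    · rw [actWord_cons_of_indep hirr h hab, actWord_cons_self, actWord_cons_self,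
        actWord_prependElem_of_indep hirr hab]
      exact TraceEquiv.refl _
    rcases letter_trichotomy (I := I) β l with ⟨b, rfl⟩ | hlβ | ⟨hneβ, hdepβ⟩
    · rw [actWord_cons_of_indep hirr g hba, actWord_cons_self, actWord_cons_self,
        actWord_prependElem_of_indep hirr hba]
      exact TraceEquiv.refl _
    · rw [actWord_cons_of_indep hirr _ hlα, actWord_cons_of_indep hirr _ hlβ,
        actWord_cons_of_indep hirr _ hlα, actWord_cons_of_indep hirr _ hlβ]
      exact ih.cons l
    · rw [actWord_cons_of_indep hirr _ hlα, actWord_cons_of_dep _ hneβ hdepβ,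
        actWord_cons_of_dep _ hneβ hdepβ, actWord_prependElem_of_indep hirr hba,
        actWord_cons_of_indep hirr _ hlα]
      exact TraceEquiv.refl _
    rcases letter_trichotomy (I := I) β l with ⟨b, rfl⟩ | hlβ | ⟨hneβ, hdepβ⟩
    · exact absurd hba hdepα
    · rw [actWord_cons_of_indep hirr _ hlβ, actWord_cons_of_dep _ hneα hdepα,
        actWord_cons_of_dep _ hneα hdepα, actWord_prependElem_of_indep hirr hab,
        actWord_cons_of_indep hirr _ hlβ]
      exact TraceEquiv.refl _
    · rw [actWord_cons_of_dep _ hneα hdepα, actWord_cons_of_dep _ hneβ hdepβ,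
        actWord_prependElem_of_indep hirr hba, actWord_prependElem_of_indep hirr hab,
        actWord_cons_of_dep _ hneα hdepα, actWord_cons_of_dep _ hneβ hdepβ]
      exact prependElem_comm_traceEquiv hab h g _

theorem actWord_swap_traceEquiv (hirr : ∀ α, ¬ I α α) (hsym : ∀ α β, I α β → I β α) {α : L}
    (g : G α) {a b : Letter L G} (hab : I a.1 b.1) (u : W) :
    TraceEquiv I G (actWord I G α g (a :: b :: u)) (actWord I G α g (b :: a :: u)) := by
  rcases letter_trichotomy (I := I) α a with ⟨a, rfl⟩ | haα | ⟨hneα, hdepα⟩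
  · rw [actWord_cons_self, actWord_cons_of_indep hirr g (hsym _ _ hab), actWord_cons_self]
    exact (cons_prependElem_traceEquiv (hsym _ _ hab) _ u).symm
  rcases letter_trichotomy (I := I) α b with ⟨b, rfl⟩ | hbα | ⟨hneβ, hdepβ⟩
  · rw [actWord_cons_of_indep hirr g haα, actWord_cons_self, actWord_cons_self]
    exact cons_prependElem_traceEquiv haα _ u
  · rw [actWord_cons_of_indep hirr g haα, actWord_cons_of_indep hirr g hbα,
      actWord_cons_of_indep hirr g hbα, actWord_cons_of_indep hirr g haα]
    exact TraceEquiv.swap hab _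
  · rw [actWord_cons_of_indep hirr g haα, actWord_cons_of_dep g hneβ hdepβ,
      actWord_cons_of_dep g hneβ hdepβ]
    exact (cons_prependElem_traceEquiv haα g _).trans
      ((TraceEquiv.swap hab u).prependElem α g)
  rcases letter_trichotomy (I := I) α b with ⟨b, rfl⟩ | hbα | ⟨hneβ, hdepβ⟩
  · exact absurd hab hdepα
  · rw [actWord_cons_of_dep g hneα hdepα, actWord_cons_of_indep hirr g hbα,
      actWord_cons_of_dep g hneα hdepα]
    exact ((TraceEquiv.swap hab u).prependElem α g).trans
      (cons_prependElem_traceEquiv hbα g _).symm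
  · rw [actWord_cons_of_dep g hneα hdepα, actWord_cons_of_dep g hneβ hdepβ]
    exact (TraceEquiv.swap hab u).prependElem α g

theorem actWord_traceStep (hirr : ∀ α, ¬ I α α) (hsym : ∀ α β, I α β → I β α) {α : L}
    (g : G α) {u v : W} (h : TraceStep I G u v) :
    TraceEquiv I G (actWord I G α g u) (actWord I G α g v) := by
  obtain ⟨s, t, a, b, hab⟩ := h
  induction s with
  | nil => exact actWord_swap_traceEquiv hirr hsym g hab t
  | cons l s ih =>
    have hstep : TraceEquiv I G (s ++ a :: b :: t) (s ++ b :: a :: t) :=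
      Relation.EqvGen.rel _ _ (TraceStep.swap s t a b hab)
    simp only [List.cons_append]
    rcases letter_trichotomy (I := I) α l with ⟨c, rfl⟩ | hl | ⟨hne, hdep⟩
    · rw [actWord_cons_self, actWord_cons_self]
      exact hstep.prependElem α _
    · rw [actWord_cons_of_indep hirr g hl, actWord_cons_of_indep hirr g hl]
      exact ih.cons l
    · rw [actWord_cons_of_dep g hne hdep, actWord_cons_of_dep g hne hdep]
      exact (hstep.cons l).prependElem α g

theorem TraceEquiv.actWord (hirr : ∀ α, ¬ I α α) (hsym : ∀ α β, I α β → I β α) {α : L}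
    (g : G α) {u v : W} (h : TraceEquiv I G u v) :
    TraceEquiv I G (actWord I G α g u) (actWord I G α g v) := by
  induction h with
  | rel _ _ h => exact actWord_traceStep hirr hsym g h
  | refl => exact refl _
  | symm _ _ _ ih => exact ih.symm
  | trans _ _ _ _ _ ih₁ ih₂ => exact ih₁.trans ih₂

end Action

section NormalForm

variable {L : Type} {I : L → L → Prop} {G : L → Type} [∀ α, Group (G α)]

local notation "W" => List (Letter L G)

variable (I G) in
def ReducedTrace : Type :=
  Quotient ((Relation.EqvGen.setoid (TraceStep I G)).comap
    (Subtype.val : {w : W // Reduced I G w} → W))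

namespace ReducedTrace

variable (I G) in
def mk (w : W) (hw : Reduced I G w) : ReducedTrace I G := Quotient.mk _ ⟨w, hw⟩

theorem mk_eq_mk_iff {u v : W} (hu : Reduced I G u) (hv : Reduced I G v) :
    mk I G u hu = mk I G v hv ↔ TraceEquiv I G u v :=
  Quotient.eq

@[elab_as_elim]
theorem ind {p : ReducedTrace I G → Prop} (h : ∀ w hw, p (mk I G w hw)) (X : ReducedTrace I G) :
    p X :=
  Quotient.ind (fun w => h w.1 w.2) X

variable (hirr : ∀ α, ¬ I α α) (hsym : ∀ α β, I α β → I β α)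

noncomputable def act (α : L) (g : G α) : ReducedTrace I G → ReducedTrace I G :=
  Quotient.map (fun w => ⟨actWord I G α g w.1, reduced_actWord hirr hsym g w.2⟩)
    (fun _ _ h => TraceEquiv.actWord hirr hsym g h)

theorem act_mk {α : L} (g : G α) {w : W} (hw : Reduced I G w) :
    act hirr hsym α g (mk I G w hw) = mk I G (actWord I G α g w) (reduced_actWord hirr hsym g hw) :=
  rfl

theorem act_one (α : L) (X : ReducedTrace I G) : act hirr hsym α 1 X = X :=
  X.ind fun w hw => by simp only [act_mk, actWord_one hirr]

theorem act_act {α : L} (g h : G α) (X : ReducedTrace I G) :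
    act hirr hsym α g (act hirr hsym α h X) = act hirr hsym α (g * h) X :=
  X.ind fun _ hw => by
    rw [act_mk, act_mk, act_mk, mk_eq_mk_iff]; exact actWord_mul hirr g h hw

theorem act_comm {α β : L} (hab : I α β) (g : G α) (h : G β) (X : ReducedTrace I G) :
    act hirr hsym α g (act hirr hsym β h X) = act hirr hsym β h (act hirr hsym α g X) :=
  X.ind fun w _ => by
    rw [act_mk, act_mk, act_mk, act_mk, mk_eq_mk_iff]; exact actWord_comm hirr hsym hab g h w

noncomputable def actPerm (α : L) : G α →* Equiv.Perm (ReducedTrace I G) where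
  toFun g :=
    { toFun := act hirr hsym α g
      invFun := act hirr hsym α g⁻¹
      left_inv X := by rw [act_act, inv_mul_cancel, act_one]
      right_inv X := by rw [act_act, mul_inv_cancel, act_one] }
  map_one' := Equiv.ext (act_one hirr hsym α)
  map_mul' g h := Equiv.ext fun X => (act_act hirr hsym g h X).symm

noncomputable def gpPerm : GP I G →* Equiv.Perm (ReducedTrace I G) :=
  QuotientGroup.lift _ (Monoid.CoprodI.lift (actPerm hirr hsym)) <|
    Subgroup.normalClosure_le_normal <| by
      rintro _ ⟨α, β, g, h, hab, rfl⟩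
      simp only [SetLike.mem_coe, MonoidHom.mem_ker, map_mul, map_inv,
        Monoid.CoprodI.lift_of, mul_inv_eq_iff_eq_mul]
      exact Equiv.ext (act_comm hirr hsym hab g h)

theorem gpPerm_gpOf (α : L) (g : G α) :
    gpPerm hirr hsym (gpOf I G α g) = actPerm hirr hsym α g :=
  Monoid.CoprodI.lift_of (actPerm hirr hsym) g

end ReducedTrace

variable (I G) in
noncomputable def reduceWord : W → W
  | [] => []
  | l :: u => actWord I G l.1 l.2.1 (reduceWord u)

theorem reduced_reduceWord (hirr : ∀ α, ¬ I α α) (hsym : ∀ α β, I α β → I β α) (w : W) :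
    Reduced I G (reduceWord I G w) := by
  induction w with
  | nil => exact reduced_nil
  | cons l w ih => exact reduced_actWord hirr hsym _ ih

theorem map_fst_reduceWord_subperm (hirr : ∀ α, ¬ I α α) (w : W) :
    ((reduceWord I G w).map Sigma.fst).Subperm (w.map Sigma.fst) := by
  induction w with
  | nil => exact List.Subperm.refl _
  | cons l w ih =>
    exact (map_fst_actWord_subperm hirr l.1 l.2.1 _).trans ((List.subperm_cons l.1).mpr ih)

theorem reduceWord_traceEquiv (hirr : ∀ α, ¬ I α α) (hsym : ∀ α β, I α β → I β α) {w : W}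
    (hw : Reduced I G w) : TraceEquiv I G (reduceWord I G w) w := by
  induction w with
  | nil => exact TraceEquiv.refl _
  | cons l w ih =>
    rw [reduced_cons_iff] at hw
    have hhead := actWord_traceEquiv_prependElem hirr l.2.1 hw.2
    rw [prependElem_val] at hhead
    exact (TraceEquiv.actWord hirr hsym _ (ih hw.1)).trans hhead

theorem ReducedTrace.gpPerm_evalWord (hirr : ∀ α, ¬ I α α) (hsym : ∀ α β, I α β → I β α)
    (w : W) : gpPerm hirr hsym (evalWord I G w) (mk I G [] reduced_nil) =
      mk I G (reduceWord I G w) (reduced_reduceWord hirr hsym w) := by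
  induction w with
  | nil => rfl
  | cons l w ih =>
    rw [evalWord_cons, map_mul, Equiv.Perm.mul_apply, ih, gpPerm_gpOf]
    rfl

theorem reduceWord_traceEquiv_of_evalWord_eq (hirr : ∀ α, ¬ I α α)
    (hsym : ∀ α β, I α β → I β α) {w w' : W} (hw : Reduced I G w)
    (h : evalWord I G w' = evalWord I G w) : TraceEquiv I G (reduceWord I G w') w := by
  have hclass := ReducedTrace.gpPerm_evalWord hirr hsym w'
  rw [h, ReducedTrace.gpPerm_evalWord, ReducedTrace.mk_eq_mk_iff] at hclass
  exact hclass.symm.trans (reduceWord_traceEquiv hirr hsym hw)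

theorem exists_countAlpha_lt_of_not_reduced (hsym : ∀ α β, I α β → I β α) {w : W}
    (hw : ¬ Reduced I G w) :
    ∃ β w', countAlpha G β w' < countAlpha G β w ∧ evalWord I G w' = evalWord I G w := by
  obtain ⟨β, b, b', x, u, y, rfl, hu⟩ := not_not.mp hw
  refine ⟨β, x ++ u ++ prependElem G β (b.1 * b'.1) y, ?_, ?_⟩
  · have hy : countAlpha G β (prependElem G β (b.1 * b'.1) y) ≤ countAlpha G β (⟨β, b'⟩ :: y) :=
      countAlpha_le_of_subperm β (map_fst_prependElem_sublist β _ y).subperm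
    simp only [countAlpha_append, countAlpha_cons_self] at hy ⊢
    omega
  · simp only [evalWord_append, evalWord_cons, evalWord_prependElem, map_mul]
    rw [(commute_evalWord_of_indepWord hsym hu b.1).left_comm]
    simp only [mul_assoc]

end NormalForm

theorem reduced_iff_forall_alphaReduced_general
    {L : Type} (I : L → L → Prop) (G : L → Type) [∀ α, Group (G α)]
    (hirr : ∀ α, ¬ I α α) (hsym : ∀ α β, I α β → I β α)
    (w : List (Letter L G)) :
    Reduced I G w ↔ ∀ α : L, AlphaReduced I G α w := by
  constructor
  · intro hw α w' hlt heq
    have hperm := (reduceWord_traceEquiv_of_evalWord_eq hirr hsym hw heq).perm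
    have hle₁ := countAlpha_le_of_subperm α (hperm.map Sigma.fst).symm.subperm
    have hle₂ := countAlpha_le_of_subperm α (map_fst_reduceWord_subperm hirr w')
    omega
  · intro h
    by_contra hw
    obtain ⟨β, w', hlt, heq⟩ := exists_countAlpha_lt_of_not_reduced hsym hw
    exact h β w' hlt heq

theorem reduced_iff_forall_alphaReduced
    {L : Type} [Finite L] (I : L → L → Prop) (G : L → Type) [∀ α, Group (G α)]
    (hirr : ∀ α, ¬ I α α) (hsym : ∀ α β, I α β → I β α)
    (w : List (Letter L G)) :
    Reduced I G w ↔ ∀ α : L, AlphaReduced I G α w :=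
  reduced_iff_forall_alphaReduced_general I G hirr hsym w
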